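/- Let G=(V,E) be an unweighted undirected graph, S a nonempty subset of V, h(u)=d(u,S), and G_S the subgraph of G such that an edge (x,y) belongs to G_S iff 1 ≤ h(x) or 1 ≤ h(y). If a shortest path P(u,v) in G is not entirely contained in G_S, then h(u) + h(v) ≤ d_G(u,v) + 1. -/
import Mathlib

/-- `h(u) = d(u,S)` in an unweighted graph: the minimum graph distance to `S`. -/
noncomputable def hSdist {V : Type*} (G : SimpleGraph V) (S : Set V) (u : V) : ℕ :=
  sInf {d | ∃ s ∈ S, G.dist u s = d}

lemma dart_split {V : Type*} (G : SimpleGraph V) (hconn : G.Connected) :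
    ∀ {u v : V} (P : G.Walk u v) (d : G.Dart), d ∈ P.darts →
      G.dist u d.fst + G.dist d.snd v + 1 ≤ P.length := by
  intro u v P
  induction P with
  | nil => intro d hd; simp at hd
  | cons h p ih =>
    rename_i a b c
    intro d hd
    simp only [SimpleGraph.Walk.darts_cons, List.mem_cons] at hd
    rcases hd with rfl | hd
    · simp only [SimpleGraph.Walk.length_cons]
      have h1 : G.dist a a = 0 := by simp
      have h2 : G.dist b c ≤ p.length := SimpleGraph.dist_le p
      simp [h1]; omega
    · have h3 := ih d hd
      have h4 : G.dist a d.fst ≤ G.dist a b + G.dist b d.fst :=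
        hconn.dist_triangle
      have h5 : G.dist a b ≤ 1 := by
        have := SimpleGraph.dist_le (SimpleGraph.Walk.cons h SimpleGraph.Walk.nil)
        simpa using this
      simp only [SimpleGraph.Walk.length_cons]
      omega

lemma hSdist_le {V : Type*} (G : SimpleGraph V) (S : Set V) (u s : V) (hs : s ∈ S) :
    hSdist G S u ≤ G.dist u s :=
  Nat.sInf_le ⟨s, hs, rfl⟩

/-- Unweighted truncation lemma: if a shortest path `P(u,v)` is not entirely
contained in `G_S` (where an edge `(x,y)` is kept iff `1 ≤ h x` or `1 ≤ h y`),
then `h(u) + h(v) ≤ d_G(u,v) + 1`. -/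
theorem stmt1 {V : Type*} [Fintype V] (G : SimpleGraph V) (hconn : G.Connected)
    (S : Set V) (hS_ne : S.Nonempty)
    (u v : V) (P : G.Walk u v) (hP : P.length = G.dist u v)
    (hnot : ¬ ∀ e ∈ P.darts, 1 ≤ hSdist G S e.fst ∨ 1 ≤ hSdist G S e.snd) :
    hSdist G S u + hSdist G S v ≤ G.dist u v + 1 := by
  push_neg at hnot
  obtain ⟨d, hd, h1, h2⟩ := hnot
  have key : ∀ x : V, hSdist G S x = 0 → x ∈ S := by
    intro x hx
    have hne : {d | ∃ s ∈ S, G.dist x s = d}.Nonempty := by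
      obtain ⟨s, hs⟩ := hS_ne
      exact ⟨G.dist x s, s, hs, rfl⟩
    have := (Nat.sInf_eq_zero.mp hx).resolve_right (by
      intro h; exact absurd h (Set.nonempty_iff_ne_empty.mp hne))
    obtain ⟨s, hs, hds⟩ := this
    have : x = s := by
      have := (hconn x s).dist_eq_zero_iff.mp hds
      exact this
    exact this ▸ hs
  have hf : d.fst ∈ S := key _ (by omega)
  have hs : d.snd ∈ S := key _ (by omega)
  have hu := hSdist_le G S u d.fst hf
  have hv := hSdist_le G S v d.snd hs
  have hsplit := dart_split G hconn P d hd
  have hvv : G.dist v d.snd = G.dist d.snd v := SimpleGraph.dist_comm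
  omega
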